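/- Let u_p : W → ℂ be a sequence of holomorphic functions on a connected open set W ⊂ ℂⁿ and d a positive integer. If (u_p)^d converges uniformly on compact subsets of W to the constant function 1, then there exist pairwise disjoint subsets N_0, …, N_{d−1} of ℕ whose union is cofinite in ℕ such that for each j, the subsequence (u_p)_{p ∈ N_j} converges uniformly on compact subsets of W to the constant e^{2πij/d}, provided each u_p is nowhere vanishing on W and W is simply connected. -/

import Mathlib

/-!
Fix a base point `z₀ ∈ W` and sort the indices `p` by the `d`-th root of unity closest to
`u p z₀` (eventually there is one, since `(u p z₀)^d → 1`). Given a compact `K ⊆ W`, enlarge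
`K ∪ {z₀}` to a compact connected `L ⊆ W`. For large `p`, `u p` maps `L` into the union of
small pairwise disjoint discs around the roots of unity; being continuous on the connected set
`L`, it maps all of `L` into a single disc, namely the one containing `u p z₀`.
-/

open Complex Metric Set Filter Function Topology

noncomputable def unitRoot (d : ℕ) (j : Fin d) : ℂ :=
  exp (2 * Real.pi * I * j / d)

lemma unitRoot_eq_pow {d : ℕ} (j : Fin d) :
    unitRoot d j = exp (2 * Real.pi * I / d) ^ (j : ℕ) := by
  rw [unitRoot, ← exp_nat_mul]
  ring_nf

lemma unitRoot_injective (d : ℕ) : Injective (unitRoot d) := fun i j h => by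
  rw [unitRoot_eq_pow, unitRoot_eq_pow] at h
  exact Fin.ext ((isPrimitiveRoot_exp d i.pos.ne').pow_inj i.2 j.2 h)

lemma unitRoot_pow {d : ℕ} (j : Fin d) : unitRoot d j ^ d = 1 := by
  rw [unitRoot_eq_pow, pow_right_comm, (isPrimitiveRoot_exp d j.pos.ne').pow_eq_one, one_pow]

lemma pow_sub_one_eq_prod_sub_unitRoot {d : ℕ} (hd : 0 < d) (w : ℂ) :
    w ^ d - 1 = ∏ j : Fin d, (w - unitRoot d j) := by
  classical
  have hroots : Finset.univ.image (unitRoot d) = Polynomial.nthRootsFinset d (1 : ℂ) := by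
    refine Finset.eq_of_subset_of_card_le ?_ ?_
    · simp only [Finset.image_subset_iff, Finset.mem_univ, Polynomial.mem_nthRootsFinset hd,
        unitRoot_pow, implies_true]
    · rw [(isPrimitiveRoot_exp d hd.ne').card_nthRootsFinset,
        Finset.card_image_of_injective _ (unitRoot_injective d), Finset.card_univ,
        Fintype.card_fin]
  have := congrArg (Polynomial.eval w)
    (Polynomial.X_pow_sub_one_eq_prod hd (isPrimitiveRoot_exp d hd.ne'))
  rw [← hroots, Finset.prod_image fun i _ j _ h => unitRoot_injective d h] at this
  simpa [Polynomial.eval_prod] using this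

lemma exists_norm_sub_unitRoot_lt {d : ℕ} (hd : 0 < d) {w : ℂ} {ε : ℝ} (hε : 0 ≤ ε)
    (h : ‖w ^ d - 1‖ < ε ^ d) : ∃ j, ‖w - unitRoot d j‖ < ε := by
  by_contra! hfar
  refine h.not_ge ?_
  calc ε ^ d = ∏ _j : Fin d, ε := by simp
    _ ≤ ∏ j : Fin d, ‖w - unitRoot d j‖ :=
        Finset.prod_le_prod (fun _ _ => hε) fun j _ => hfar j
    _ = ‖w ^ d - 1‖ := by rw [pow_sub_one_eq_prod_sub_unitRoot hd, norm_prod]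

lemma exists_pos_pairwise_disjoint_ball {ι X : Type*} [Finite ι] [MetricSpace X] {c : ι → X}
    (hc : Injective c) : ∃ r > 0, Pairwise (Disjoint on fun i => ball (c i) r) := by
  have hsep : ∀ᶠ r in 𝓝[>] (0 : ℝ), ∀ i j, i ≠ j → r < dist (c i) (c j) / 2 :=
    eventually_all.2 fun i => eventually_all.2 fun j => by
      by_cases hij : i = j
      · exact Eventually.of_forall fun _ h => absurd hij h
      · exact eventually_nhdsWithin_of_eventually_nhds <| (eventually_lt_nhds <|
          half_pos (dist_pos.2 (hc.ne hij))).mono fun _ h _ => h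
  obtain ⟨r, hr, hrsep⟩ := (hsep.and self_mem_nhdsWithin).exists
  exact ⟨r, hrsep, fun i j hij => ball_disjoint_ball (by linarith [hr i j hij])⟩

lemma IsPreconnected.mapsTo_of_pairwise_disjoint {X Y ι : Type*} [TopologicalSpace X]
    [TopologicalSpace Y] {L : Set X} (hL : IsPreconnected L) {f : X → Y} (hf : ContinuousOn f L)
    {U : ι → Set Y} (hU : ∀ i, IsOpen (U i)) (hdisj : Pairwise (Disjoint on U))
    (hcover : MapsTo f L (⋃ i, U i)) {z₀ : X} {j : ι} (hz₀ : z₀ ∈ L) (hj : f z₀ ∈ U j) :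
    MapsTo f L (U j) := by
  rw [mapsTo_iff_image_subset]
  refine (hL.image f hf).subset_left_of_subset_union (hU j)
    (isOpen_biUnion fun i (_ : i ≠ j) => hU i)
    (disjoint_iUnion₂_right.2 fun i hi => hdisj (Ne.symm hi)) ?_
    ⟨f z₀, mem_image_of_mem f hz₀, hj⟩
  rintro _ ⟨z, hz, rfl⟩
  obtain ⟨i, hi⟩ := mem_iUnion.1 (hcover hz)
  by_cases hij : i = j
  · exact Or.inl (hij ▸ hi)
  · exact Or.inr (mem_biUnion hij hi)

lemma IsPathConnected.exists_isCompact_isPreconnected_superset {E : Type*}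
    [NormedAddCommGroup E] [NormedSpace ℝ E] [ProperSpace E] {W K : Set E}
    (hW : IsPathConnected W) (hWo : IsOpen W) (hK : IsCompact K) (hKW : K ⊆ W) :
    ∃ L, IsCompact L ∧ IsPreconnected L ∧ K ⊆ L ∧ L ⊆ W := by
  obtain ⟨b, hb⟩ := hW.nonempty
  have hpiece : ∀ x ∈ W, ∃ S ∈ 𝓝 x, IsCompact S ∧ IsPreconnected S ∧ b ∈ S ∧ S ⊆ W := by
    intro x hx
    obtain ⟨ρ, hρ, hρW⟩ := nhds_basis_closedBall.mem_iff.1 (hWo.mem_nhds hx)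
    obtain ⟨γ, hγ⟩ := hW.joinedIn b hb x hx
    refine ⟨closedBall x ρ ∪ range γ,
      mem_of_superset (closedBall_mem_nhds x hρ) subset_union_left,
      (isCompact_closedBall x ρ).union (isCompact_range γ.continuous),
      (convex_closedBall x ρ).isPreconnected.union x (mem_closedBall_self hρ.le) ⟨1, γ.target⟩
        (isPreconnected_range γ.continuous), Or.inr ⟨0, γ.source⟩, union_subset hρW ?_⟩
    rintro _ ⟨s, rfl⟩
    exact hγ s
  choose! S hSx hSc hSp hbS hSW using hpiece
  obtain ⟨t, htK, hKt⟩ := hK.elim_nhds_subcover S fun x hx => hSx x (hKW hx)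
  refine ⟨⋃ x ∈ t, S x, t.isCompact_biUnion fun x hx => hSc x (hKW (htK x hx)), ?_, hKt,
    iUnion₂_subset fun x hx => hSW x (hKW (htK x hx))⟩
  rw [← Finset.set_biUnion_coe, ← sUnion_image]
  exact isPreconnected_sUnion b _ (forall_mem_image.2 fun x hx => hbS x (hKW (htK x hx)))
    (forall_mem_image.2 fun x hx => hSp x (hKW (htK x hx)))

lemma norm_sub_unitRoot_lt_of_isPreconnected {X : Type*} [TopologicalSpace X] {L : Set X}
    (hL : IsPreconnected L) {f : X → ℂ} (hf : ContinuousOn f L) {d : ℕ} {r ε : ℝ}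
    (hr : Pairwise (Disjoint on fun j => ball (unitRoot d j) r)) (hε : 0 < ε) (hεr : ε ≤ r)
    (hpow : ∀ z ∈ L, ‖f z ^ d - 1‖ < ε ^ d) {z₀ : X} (hz₀ : z₀ ∈ L) {j : Fin d}
    (hj : ‖f z₀ - unitRoot d j‖ < r) : ∀ z ∈ L, ‖f z - unitRoot d j‖ < ε := by
  have hcover : MapsTo f L (⋃ i, ball (unitRoot d i) ε) := fun z hz => by
    obtain ⟨i, hi⟩ := exists_norm_sub_unitRoot_lt j.pos hε.le (hpow z hz)
    exact mem_iUnion.2 ⟨i, mem_ball_iff_norm.2 hi⟩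
  obtain ⟨i, hi⟩ := mem_iUnion.1 (hcover hz₀)
  obtain rfl : i = j := by
    by_contra hij
    exact disjoint_left.1 (hr hij) (ball_subset_ball hεr hi) (mem_ball_iff_norm.2 hj)
  have hdisj : Pairwise (Disjoint on fun i => ball (unitRoot d i) ε) := fun k l hkl =>
    (hr hkl).mono (ball_subset_ball hεr) (ball_subset_ball hεr)
  exact fun z hz => mem_ball_iff_norm.1 <|
    hL.mapsTo_of_pairwise_disjoint hf (fun _ => isOpen_ball) hdisj hcover hz₀ hi hz

theorem stmt8_general (n : ℕ) (W : Set (Fin n → ℂ)) (hWo : IsOpen W) (hWc : IsConnected W)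
    (d : ℕ) (hd : 0 < d)
    (u : ℕ → (Fin n → ℂ) → ℂ)
    (hu : ∀ p, DifferentiableOn ℂ (u p) W)
    (hconv : ∀ K ⊆ W, IsCompact K →
      TendstoUniformlyOn (fun p z => u p z ^ d) (fun _ => 1) Filter.atTop K) :
    ∃ Nj : Fin d → Set ℕ,
      (Pairwise fun j j' => Disjoint (Nj j) (Nj j')) ∧
      (⋃ j, Nj j)ᶜ.Finite ∧
      ∀ j : Fin d, ∀ K ⊆ W, IsCompact K → ∀ ε > 0, ∃ P : ℕ, ∀ p ∈ Nj j, P ≤ p →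
        ∀ z ∈ K, ‖u p z - Complex.exp (2 * Real.pi * Complex.I * j / d)‖ < ε := by
  have hpow : ∀ K ⊆ W, IsCompact K → ∀ ε > 0, ∃ P, ∀ p ≥ P, ∀ z ∈ K, ‖u p z ^ d - 1‖ < ε :=
    fun K hKW hK ε hε => by
      simpa only [dist_eq_norm'] using
        eventually_atTop.1 (Metric.tendstoUniformlyOn_iff.1 (hconv K hKW hK) ε hε)
  obtain ⟨z₀, hz₀⟩ := hWc.nonempty
  obtain ⟨r, hr, hdisj⟩ := exists_pos_pairwise_disjoint_ball (unitRoot_injective d)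
  obtain ⟨P₀, hP₀⟩ :=
    hpow {z₀} (singleton_subset_iff.2 hz₀) isCompact_singleton (r ^ d) (by positivity)
  refine ⟨fun j => {p | P₀ ≤ p ∧ ‖u p z₀ - unitRoot d j‖ < r}, fun i j hij => ?_, ?_, ?_⟩
  · exact disjoint_left.2 fun p hpi hpj =>
      disjoint_left.1 (hdisj hij) (mem_ball_iff_norm.2 hpi.2) (mem_ball_iff_norm.2 hpj.2)
  · refine (finite_Iio P₀).subset fun p hp => mem_Iio.2 <| not_le.1 fun hP₀p => hp ?_
    obtain ⟨j, hj⟩ := exists_norm_sub_unitRoot_lt hd hr.le (hP₀ p hP₀p z₀ rfl)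
    exact mem_iUnion.2 ⟨j, hP₀p, hj⟩
  · intro j K hKW hK ε hε
    obtain ⟨L, hL, hLpre, hKL, hLW⟩ :=
      (hWo.isConnected_iff_isPathConnected.1 hWc).exists_isCompact_isPreconnected_superset hWo
        (hK.insert z₀) (insert_subset hz₀ hKW)
    obtain ⟨P, hP⟩ := hpow L hLW hL (min ε r ^ d) (by positivity)
    refine ⟨P, fun p hp hPp z hz => ?_⟩
    exact (norm_sub_unitRoot_lt_of_isPreconnected hLpre ((hu p).continuousOn.mono hLW) hdisj
      (lt_min hε hr) (min_le_right _ _) (hP p hPp) (hKL (mem_insert _ _)) hp.2 z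
      (hKL (mem_insert_of_mem _ hz))).trans_le (min_le_left _ _)

/-- Let `u_p : W → ℂ` be nowhere-vanishing holomorphic functions on a simply
connected domain `W ⊂ ℂⁿ` and `d` a positive integer. If `(u_p)^d → 1` uniformly on compact
subsets of `W`, then there are pairwise disjoint subsets `N_0, …, N_{d−1}` of `ℕ` with cofinite
union such that `(u_p)_{p ∈ N_j}` converges uniformly on compact subsets of `W` to the constant
`e^{2πij/d}`. -/
theorem stmt8 (n : ℕ) (W : Set (Fin n → ℂ)) (hWo : IsOpen W) (hWc : IsConnected W)
    (hWsc : SimplyConnectedSpace W)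
    (d : ℕ) (hd : 0 < d)
    (u : ℕ → (Fin n → ℂ) → ℂ)
    (hu : ∀ p, DifferentiableOn ℂ (u p) W)
    (hune : ∀ p, ∀ z ∈ W, u p z ≠ 0)
    (hconv : ∀ K ⊆ W, IsCompact K →
      TendstoUniformlyOn (fun p z => u p z ^ d) (fun _ => 1) Filter.atTop K) :
    ∃ Nj : Fin d → Set ℕ,
      (Pairwise fun j j' => Disjoint (Nj j) (Nj j')) ∧
      (⋃ j, Nj j)ᶜ.Finite ∧
      ∀ j : Fin d, ∀ K ⊆ W, IsCompact K → ∀ ε > 0, ∃ P : ℕ, ∀ p ∈ Nj j, P ≤ p →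
        ∀ z ∈ K, ‖u p z - Complex.exp (2 * Real.pi * Complex.I * j / d)‖ < ε :=
  stmt8_general n W hWo hWc d hd u hu hconv
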